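/- arXiv:1701.00407 — 4 statements merged into one kernel-verified Lean document; each statement's English description precedes it below -/
import Mathlib

section
/- In the ring A = ℤ[√5], the polynomial H = x² + √5 x + 1 is irreducible over A, even though its leading coefficient and discriminant both equal 1. -/
/-!
Every element of `ℤ[√5]` has the form `a + b√5` with `a, b ∈ ℤ`, and a monic quadratic over a
domain is irreducible as soon as it has no root. If `a + b√5` were a root of `x² + √5x + 1`,
irrationality of `√5` would give `a(2b + 1) = 0` and `a² + 5b² + 5b + 1 = 0`; the first forces
`a = 0`, and then the second fails modulo `5`.
-/

open Polynomial

theorem exists_int_add_int_mul_of_mem_closure {R : Type*} [CommRing R] {t : R} {n : ℤ}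
    (ht : t * t = n) {x : R} (hx : x ∈ Subring.closure {t}) :
    ∃ a b : ℤ, x = a + b * t := by
  induction hx using Subring.closure_induction with
  | mem x hx => exact ⟨0, 1, by simp [Set.mem_singleton_iff.mp hx]⟩
  | zero => exact ⟨0, 0, by simp⟩
  | one => exact ⟨1, 0, by simp⟩
  | add x y _ _ hx hy =>
      obtain ⟨a, b, rfl⟩ := hx
      obtain ⟨c, d, rfl⟩ := hy
      exact ⟨a + c, b + d, by push_cast; ring⟩
  | neg x _ hx =>
      obtain ⟨a, b, rfl⟩ := hx
      exact ⟨-a, -b, by push_cast; ring⟩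
  | mul x y _ _ hx hy =>
      obtain ⟨a, b, rfl⟩ := hx
      obtain ⟨c, d, rfl⟩ := hy
      exact ⟨a * c + n * b * d, a * d + b * c, by push_cast; linear_combination (b * d : R) * ht⟩

theorem Irrational.intCast_eq_zero_of_add_mul_eq_zero {t : ℝ} (ht : Irrational t) {a b : ℤ}
    (h : (a : ℝ) + b * t = 0) : a = 0 ∧ b = 0 := by
  obtain rfl : b = 0 := by
    by_contra hb
    exact ((ht.intCast_mul hb).intCast_add a).ne_zero h
  exact ⟨by simpa using h, rfl⟩

theorem sq_add_sqrt_five_mul_add_one_ne_zero {x : ℝ} (hx : x ∈ Subring.closure {√5}) :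
    x ^ 2 + √5 * x + 1 ≠ 0 := by
  have h5 : √5 * √5 = 5 := Real.mul_self_sqrt (by norm_num)
  obtain ⟨a, b, rfl⟩ := exists_int_add_int_mul_of_mem_closure (n := 5) (by exact_mod_cast h5) hx
  intro h
  obtain ⟨hrat, hirr⟩ := Irrational.intCast_eq_zero_of_add_mul_eq_zero
    (by simpa using Nat.prime_five.irrational_sqrt)
    (a := a ^ 2 + 5 * b ^ 2 + 5 * b + 1) (b := a * (2 * b + 1))
    (by push_cast; linear_combination h - (b ^ 2 + b : ℝ) * h5)
  obtain rfl : a = 0 := (mul_eq_zero.mp hirr).resolve_right (by omega)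
  omega

/-- In the ring `A = ℤ[√5]` (the subring of `ℝ` generated by `√5`), the polynomial
`H = x² + √5·x + 1` has leading coefficient `1` and discriminant `(√5)² - 4·1·1 = 1`,
yet `H` is irreducible over `A`. -/
theorem stmt_4 (s : Subring.closure ({Real.sqrt 5} : Set ℝ))
    (hs : (s : ℝ) = Real.sqrt 5) :
    (X ^ 2 + C s * X + 1 : Polynomial (Subring.closure ({Real.sqrt 5} : Set ℝ))).leadingCoeff = 1 ∧
    s ^ 2 - 4 * 1 * 1 = 1 ∧
    Irreducible (X ^ 2 + C s * X + 1 :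
      Polynomial (Subring.closure ({Real.sqrt 5} : Set ℝ))) := by
  have hmonic : (X ^ 2 + C s * X + 1 :
      Polynomial (Subring.closure ({Real.sqrt 5} : Set ℝ))).Monic := by
    monicity!
  have hdeg : (X ^ 2 + C s * X + 1 :
      Polynomial (Subring.closure ({Real.sqrt 5} : Set ℝ))).natDegree = 2 := by
    compute_degree!
  refine ⟨hmonic, Subtype.ext ?_, ?_⟩
  · show (s : ℝ) ^ 2 - 4 * 1 * 1 = 1
    norm_num [hs]
  · rw [hmonic.irreducible_iff_roots_eq_zero_of_degree_le_three hdeg.ge (by omega)]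
    refine Multiset.eq_zero_of_forall_notMem fun r hr ↦ ?_
    exact sq_add_sqrt_five_mul_add_one_ne_zero r.2 <| by
      simpa [hs] using congrArg Subtype.val ((mem_roots hmonic.ne_zero).mp hr).eq_zero
end

section
/- Let D = { c₀ + c₁x + ⋯ + cₙxⁿ ∈ ℤ[x] : c₁ is even }, a subring of ℤ[x]. Then H = x² + 2x + 1 has discriminant 0 and leading coefficient 1, but H is not a square of any element of D. -/
/-! `H = (X + 1) ^ 2`, and since `ℤ[X]` is a domain the only square roots of `H` are `±(X + 1)`,
whose coefficient of `X` is `±1`, which is odd. -/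

open Polynomial

theorem coeff_one_eq_one_or_neg_one_of_sq_eq_X_add_C_sq {R : Type*} [CommRing R]
    [NoZeroDivisors R] {p : R[X]} (a : R) (h : p ^ 2 = (X + C a) ^ 2) :
    p.coeff 1 = 1 ∨ p.coeff 1 = -1 := by
  rcases sq_eq_sq_iff_eq_or_eq_neg.mp h with rfl | rfl
  · left
    simp [coeff_X]
  · right
    simp [coeff_X]

/-- Let `D` be the subring of `ℤ[x]` consisting of polynomials whose coefficient of `x`
is even.  The polynomial `H = x² + 2x + 1` (which lies in `D`) has discriminant `0` and
leading coefficient `1`, but `H` is not the square of any element of `D`. -/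
theorem stmt_5 :
    (2 : ℤ) ^ 2 - 4 * 1 * 1 = 0 ∧
    (X ^ 2 + 2 * X + 1 : ℤ[X]).leadingCoeff = 1 ∧
    Even ((X ^ 2 + 2 * X + 1 : ℤ[X]).coeff 1) ∧
    ¬ ∃ p : ℤ[X], Even (p.coeff 1) ∧ (X ^ 2 + 2 * X + 1 : ℤ[X]) = p ^ 2 := by
  have hH : (X ^ 2 + 2 * X + 1 : ℤ[X]) = (X + C 1) ^ 2 := by
    rw [C_1]
    ring
  refine ⟨by norm_num, ?_, ?_, ?_⟩
  · rw [hH]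
    exact ((monic_X_add_C 1).pow 2).leadingCoeff
  · rw [hH, coeff_X_add_C_pow]
    decide
  · rintro ⟨p, hev, hp⟩
    rcases coeff_one_eq_one_or_neg_one_of_sq_eq_X_add_C_sq 1 (hH ▸ hp).symm with h | h <;>
      rw [h] at hev <;> exact absurd hev (by decide)
end

section
/- Let k be a field with char k ≠ 2, let t ∈ k with t ≠ 0, and let f = (x₁² + ⋯ + xₙ²)² − t(x₁⁴ + ⋯ + xₙ⁴) ∈ k[x₁,…,xₙ] with n ≥ 3. Then f has a polynomial factor of degree one if and only if n = 3 and t = 2. -/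
/-!
If a linear polynomial `p` with `∂p/∂xⱼ ≠ 0` divides `f`, then `f` vanishes identically once `xⱼ`
is replaced by the solution of `p = 0`. Specialising the other variables to `(X, 1, 0, …, 0)`
resp. `(X, 1, 1, 0, …, 0)` yields quartics in one variable `X` all of whose coefficients vanish.
The first forces `t = 2` and `(aᵢ / aⱼ)² = 1`, after which the second is contradictory; so a
fourth variable is impossible. Conversely, for `n = 3` and `t = 2`, `f` is Heron's product
`(x + y + z)(-x + y + z)(x - y + z)(x + y - z)`.
-/

open MvPolynomial

lemma Finsupp.eq_single_of_degree_eq_one {σ : Type*} {d : σ →₀ ℕ} (h : d.degree = 1) :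
    ∃ i, d = Finsupp.single i 1 := by
  obtain ⟨i, hi⟩ : ∃ i, d i ≠ 0 := by
    by_contra! h0
    simp [(Finsupp.degree_eq_zero_iff d).mpr (Finsupp.ext h0)] at h
  obtain ⟨e, rfl⟩ :=
    le_iff_exists_add.mp (Finsupp.single_le_iff.mpr (Nat.one_le_iff_ne_zero.mpr hi))
  have : e.degree = 0 := by simpa using h
  exact ⟨i, by simp [(Finsupp.degree_eq_zero_iff e).mp this]⟩

lemma Fintype.sum_update_eq {ι A M : Type*} [Fintype ι] [DecidableEq ι] [AddCommGroup M]
    (g : ι → A → M) (u : ι → A) (j : ι) (y : A) :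
    ∑ i, g i (Function.update u j y i) = ∑ i, g i (u i) - g j (u j) + g j y := by
  rw [← Finset.add_sum_erase _ _ (Finset.mem_univ j),
    ← Finset.add_sum_erase _ _ (Finset.mem_univ j), Function.update_self,
    Finset.sum_congr rfl fun i hi => by rw [Function.update_of_ne (Finset.ne_of_mem_erase hi)]]
  abel

lemma Fin.exists_notMem_of_card_lt {n : ℕ} {s : Finset (Fin n)} (h : s.card < n) :
    ∃ i, i ∉ s := by
  obtain ⟨i, -, hi⟩ := Finset.exists_mem_notMem_of_card_lt_card
    (s := s) (t := Finset.univ) (by rwa [Finset.card_univ, Fintype.card_fin])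
  exact ⟨i, hi⟩

section quarticOnLine

variable {k : Type*} [Field k] {s t α β : k}

/-- `(∑ xᵢ²)² - t ∑ xᵢ⁴` at the point `(X, 1, …, 1, -(αX + β))` with `s` ones. -/
noncomputable def quarticOnLine (s t α β : k) : Polynomial k :=
  let L := Polynomial.C α * Polynomial.X + Polynomial.C β
  (Polynomial.X ^ 2 + Polynomial.C s + L ^ 2) ^ 2 -
    Polynomial.C t * (Polynomial.X ^ 4 + Polynomial.C s + L ^ 4)

lemma four_ne_zero_of_two_ne_zero (h2 : (2 : k) ≠ 0) : (4 : k) ≠ 0 := by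
  rw [show (4 : k) = 2 * 2 by norm_num]
  exact mul_ne_zero h2 h2

lemma coeffs_eq_zero_of_quarticOnLine_eq_zero (h : quarticOnLine s t α β = 0) :
    (1 + α ^ 2) ^ 2 - t * (1 + α ^ 4) = 0 ∧
    4 * α * β * (1 + α ^ 2 - t * α ^ 2) = 0 ∧
    2 * (1 + α ^ 2) * (s + β ^ 2) + 4 * α ^ 2 * β ^ 2 - 6 * t * α ^ 2 * β ^ 2 = 0 ∧
    4 * α * β * (s + β ^ 2 - t * β ^ 2) = 0 ∧
    (s + β ^ 2) ^ 2 - t * (s + β ^ 4) = 0 := by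
  have hexp : quarticOnLine s t α β =
      Polynomial.C ((1 + α ^ 2) ^ 2 - t * (1 + α ^ 4)) * Polynomial.X ^ 4 +
      Polynomial.C (4 * α * β * (1 + α ^ 2 - t * α ^ 2)) * Polynomial.X ^ 3 +
      Polynomial.C (2 * (1 + α ^ 2) * (s + β ^ 2) + 4 * α ^ 2 * β ^ 2 - 6 * t * α ^ 2 * β ^ 2) *
        Polynomial.X ^ 2 +
      Polynomial.C (4 * α * β * (s + β ^ 2 - t * β ^ 2)) * Polynomial.X ^ 1 +
      Polynomial.C ((s + β ^ 2) ^ 2 - t * (s + β ^ 4)) * Polynomial.X ^ 0 := by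
    simp only [quarticOnLine, map_add, map_sub, map_mul, map_pow, map_ofNat, map_one]
    ring
  rw [hexp] at h
  have hcoeff (m : ℕ) := congrArg (Polynomial.coeff · m) h
  simp only [Polynomial.coeff_add, Polynomial.coeff_C_mul_X_pow] at hcoeff
  exact ⟨by simpa using hcoeff 4, by simpa using hcoeff 3, by simpa using hcoeff 2,
    by simpa using hcoeff 1, by simpa using hcoeff 0⟩

lemma quarticOnLine_one_eq_zero (h2 : (2 : k) ≠ 0) (h : quarticOnLine 1 t α β = 0) :
    t = 2 ∧ α ^ 2 = 1 := by
  obtain ⟨e4, e3, e2, e1, e0⟩ := coeffs_eq_zero_of_quarticOnLine_eq_zero h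
  have hα : α ≠ 0 := by
    rintro rfl
    exact h2 (by linear_combination e2 - e0 + (1 + β ^ 4) * e4)
  have hβ : β ≠ 0 := by
    rintro rfl
    exact h2 (by linear_combination e2 - e4 + (1 + α ^ 4) * e0)
  have h4αβ : 4 * α * β ≠ 0 := mul_ne_zero (mul_ne_zero (four_ne_zero_of_two_ne_zero h2) hα) hβ
  have hA := (mul_eq_zero.mp e3).resolve_left h4αβ
  have hB := (mul_eq_zero.mp e1).resolve_left h4αβ
  -- `hA` and `hB` turn the `X²` coefficient into a multiple of `(t - 1)(t - 2)`.
  have hfactor : 2 * α ^ 2 * β ^ 2 * ((t - 1) * (t - 2)) = 0 := by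
    linear_combination e2 - 2 * t * α ^ 2 * hB - 2 * (1 + β ^ 2) * hA
  rcases mul_eq_zero.mp ((mul_eq_zero.mp hfactor).resolve_left (by simp [h2, hα, hβ])) with ht | ht
  · exact absurd (by linear_combination hA + α ^ 2 * ht) one_ne_zero
  · exact ⟨by linear_combination ht, by linear_combination -hA - α ^ 2 * ht⟩

lemma quarticOnLine_two_ne_zero (h2 : (2 : k) ≠ 0) (hα : α ^ 2 = 1) :
    quarticOnLine 2 2 α β ≠ 0 := by
  intro h
  obtain ⟨-, -, e2, -, e0⟩ := coeffs_eq_zero_of_quarticOnLine_eq_zero h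
  have h4 := four_ne_zero_of_two_ne_zero h2
  have hβ : 4 * (β ^ 2 - 2) = 0 := by linear_combination -e2 + (4 - 6 * β ^ 2) * hα
  have hβ' : β ^ 2 = 2 := by linear_combination (mul_eq_zero.mp hβ).resolve_left h4
  exact h4 (by linear_combination e0 - (2 - β ^ 2) * hβ')

end quarticOnLine

namespace MvPolynomial

variable {σ R : Type*} [CommSemiring R] [Fintype σ]

lemma eq_C_add_sum_C_mul_X_of_totalDegree_le_one {p : MvPolynomial σ R}
    (hp : p.totalDegree ≤ 1) :
    p = C (coeff 0 p) + ∑ i, C (coeff (Finsupp.single i 1) p) * X i := by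
  classical
  ext d
  simp only [coeff_add, coeff_C, coeff_sum, coeff_C_mul, coeff_X, mul_ite, mul_one, mul_zero]
  rcases Nat.lt_or_ge d.degree 2 with hd | hd
  · interval_cases h : d.degree
    · obtain rfl := (Finsupp.degree_eq_zero_iff d).mp h
      simp
    · obtain ⟨i, rfl⟩ := Finsupp.eq_single_of_degree_eq_one h
      simp [Finsupp.single_left_inj one_ne_zero, (Finsupp.single_ne_zero.mpr one_ne_zero).symm]
  · have h0 : ¬ (0 = d) := by rintro rfl; simp at hd
    have hs : ∀ i, ¬ (Finsupp.single i 1 = d) := by rintro i rfl; simp at hd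
    simp only [h0, hs, if_false, Finset.sum_const_zero, zero_add]
    exact coeff_eq_zero_of_totalDegree_lt (by rw [← Finsupp.degree_apply]; omega)

lemma aeval_eq_of_totalDegree_le_one {A : Type*} [CommSemiring A] [Algebra R A]
    {p : MvPolynomial σ R} (hp : p.totalDegree ≤ 1) (v : σ → A) :
    aeval v p = algebraMap R A (coeff 0 p) + ∑ i, coeff (Finsupp.single i 1) p • v i := by
  conv_lhs => rw [eq_C_add_sum_C_mul_X_of_totalDegree_le_one hp]
  simp [Algebra.smul_def]

lemma exists_coeff_single_ne_zero_of_totalDegree_eq_one {p : MvPolynomial σ R}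
    (hp : p.totalDegree = 1) : ∃ i, coeff (Finsupp.single i 1) p ≠ 0 := by
  by_contra! h
  rw [eq_C_add_sum_C_mul_X_of_totalDegree_le_one hp.le] at hp
  simp [h] at hp

variable {k A : Type*} [Field k] [CommRing A] [Algebra k A]

variable (σ) in
noncomputable def quarticForm (t : k) : MvPolynomial σ k := (∑ i, X i ^ 2) ^ 2 - C t * ∑ i, X i ^ 4

lemma aeval_quarticForm (t : k) (u : σ → A) :
    aeval u (quarticForm σ t) = (∑ i, u i ^ 2) ^ 2 - algebraMap k A t * ∑ i, u i ^ 4 := by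
  simp [quarticForm]

variable [DecidableEq σ]

lemma aeval_update_eq_zero {p : MvPolynomial σ k} (hp : p.totalDegree ≤ 1) {j : σ}
    (hj : coeff (Finsupp.single j 1) p ≠ 0) (u : σ → A) :
    aeval (Function.update u j (u j - (coeff (Finsupp.single j 1) p)⁻¹ • aeval u p)) p = 0 := by
  rw [aeval_eq_of_totalDegree_le_one hp, Fintype.sum_update_eq (fun i a => _ • a), smul_sub,
    smul_inv_smul₀ hj, aeval_eq_of_totalDegree_le_one hp]
  abel

lemma quarticOnLine_eq_zero_of_dvd {t : k} {p : MvPolynomial σ k} (hdvd : p ∣ quarticForm σ t)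
    (hp : p.totalDegree ≤ 1) {j : σ} (hj : coeff (Finsupp.single j 1) p ≠ 0) {i : σ}
    {S : Finset σ} (hij : i ≠ j) (hiS : i ∉ S) (hjS : j ∉ S) :
    quarticOnLine (S.card : k) t ((coeff (Finsupp.single j 1) p)⁻¹ * coeff (Finsupp.single i 1) p)
      ((coeff (Finsupp.single j 1) p)⁻¹ *
        (coeff 0 p + ∑ l ∈ S, coeff (Finsupp.single l 1) p)) = 0 := by
  set u : σ → Polynomial k := Function.update (fun l => if l ∈ S then 1 else 0) i Polynomial.X
  set y := u j - (coeff (Finsupp.single j 1) p)⁻¹ • aeval u p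
  have huj : u j = 0 := by simp [u, hij.symm, hjS]
  have hpow (r : ℕ) (hr : r ≠ 0) :
      ∑ l, Function.update u j y l ^ r = Polynomial.X ^ r + (S.card : Polynomial k) + y ^ r := by
    rw [Fintype.sum_update_eq (fun _ b => b ^ r), huj]
    simp only [u]
    rw [Fintype.sum_update_eq (fun _ b => b ^ r)]
    simp [hiS, zero_pow hr]
    ring
  have hy : y = -(Polynomial.C ((coeff (Finsupp.single j 1) p)⁻¹ * coeff (Finsupp.single i 1) p) *
      Polynomial.X + Polynomial.C ((coeff (Finsupp.single j 1) p)⁻¹ *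
        (coeff 0 p + ∑ l ∈ S, coeff (Finsupp.single l 1) p))) := by
    simp only [y, huj, aeval_eq_of_totalDegree_le_one hp, u]
    rw [Fintype.sum_update_eq (fun l b => coeff (Finsupp.single l 1) p • b)]
    simp [hiS, Polynomial.smul_eq_C_mul]
    ring
  obtain ⟨q, hq⟩ := hdvd
  have h := congrArg (aeval (Function.update u j y)) hq
  rw [map_mul, aeval_update_eq_zero hp hj, zero_mul, aeval_quarticForm, hpow 2 two_ne_zero,
    hpow 4 four_ne_zero, hy] at h
  rw [quarticOnLine, ← h, map_natCast, Polynomial.algebraMap_eq]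
  ring

lemma quarticForm_fin_three_two :
    quarticForm (Fin 3) (2 : k) = (X 0 + X 1 + X 2) *
      ((-X 0 + X 1 + X 2) * (X 0 - X 1 + X 2) * (X 0 + X 1 - X 2)) := by
  simp only [quarticForm, Fin.sum_univ_three, map_ofNat]
  ring

lemma totalDegree_X_add_X_add_X :
    (X 0 + X 1 + X 2 : MvPolynomial (Fin 3) k).totalDegree = 1 := by
  refine (((isHomogeneous_X k 0).add (isHomogeneous_X k 1)).add
    (isHomogeneous_X k 2)).totalDegree ?_
  intro h
  simpa using congrArg (eval ![1, 0, 0]) h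

end MvPolynomial

theorem stmt_12_general (k : Type*) [Field k] (hchar : ringChar k ≠ 2)
    (n : ℕ) (hn : 3 ≤ n) (t : k) :
    (∃ p : MvPolynomial (Fin n) k, p.totalDegree = 1 ∧
        p ∣ ((∑ i : Fin n, X i ^ 2) ^ 2 - C t * ∑ i : Fin n, X i ^ 4)) ↔
      n = 3 ∧ t = 2 := by
  have h2 : (2 : k) ≠ 0 := Ring.two_ne_zero hchar
  refine ⟨fun ⟨p, hdeg, hdvd⟩ => ?_, fun ⟨hn3, ht⟩ => ?_⟩
  · obtain ⟨j, hj⟩ := exists_coeff_single_ne_zero_of_totalDegree_eq_one hdeg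
    obtain ⟨i, hi⟩ := Fin.exists_notMem_of_card_lt (s := {j}) (by simp; omega)
    obtain ⟨l, hl⟩ :=
      Fin.exists_notMem_of_card_lt (s := {i, j}) (Finset.card_le_two.trans_lt (by omega))
    simp only [Finset.mem_insert, Finset.mem_singleton, not_or] at hi hl
    have hline := quarticOnLine_eq_zero_of_dvd hdvd hdeg.le hj (S := {l}) hi
      (by simpa using Ne.symm hl.1) (by simpa using Ne.symm hl.2)
    rw [Finset.card_singleton, Nat.cast_one] at hline
    obtain ⟨rfl, hα⟩ := quarticOnLine_one_eq_zero h2 hline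
    refine ⟨?_, rfl⟩
    by_contra hn3
    obtain ⟨m, hm⟩ :=
      Fin.exists_notMem_of_card_lt (s := {i, l, j}) (Finset.card_le_three.trans_lt (by omega))
    simp only [Finset.mem_insert, Finset.mem_singleton, not_or] at hm
    have hline := quarticOnLine_eq_zero_of_dvd hdvd hdeg.le hj (S := {l, m}) hi
      (by simp [Ne.symm hl.1, Ne.symm hm.1]) (by simp [Ne.symm hl.2, Ne.symm hm.2.2])
    rw [Finset.card_pair (Ne.symm hm.2.1), Nat.cast_two] at hline
    exact quarticOnLine_two_ne_zero h2 hα hline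
  · subst hn3 ht
    exact ⟨X 0 + X 1 + X 2, totalDegree_X_add_X_add_X, _, quarticForm_fin_three_two⟩

/-- For a field `k` with `char k ≠ 2`, `t ≠ 0`, and `n ≥ 3`, the polynomial
`f = (Σxᵢ²)² - t·Σxᵢ⁴` has a factor of (total) degree one iff `n = 3` and `t = 2`. -/
theorem stmt_12 (k : Type*) [Field k] (hchar : ringChar k ≠ 2)
    (n : ℕ) (hn : 3 ≤ n) (t : k) (ht : t ≠ 0) :
    (∃ p : MvPolynomial (Fin n) k, p.totalDegree = 1 ∧
        p ∣ ((∑ i : Fin n, X i ^ 2) ^ 2 - C t * ∑ i : Fin n, X i ^ 4)) ↔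
      n = 3 ∧ t = 2 :=
  stmt_12_general k hchar n hn t
end

section
/- Let k be a field with char k ≠ 2 and with t ∈ k, t ∉ {0, 2}. The polynomial f = (x₁² + x₂² + x₃²)² − t(x₁⁴ + x₂⁴ + x₃⁴) ∈ k[x₁,x₂,x₃] is reducible if and only if t = 3 and k contains a primitive third root of unity. -/
/-!
Over `R = k[x₁, x₂]`, `f` is the biquadratic `(1 - t) x₀⁴ + b x₀² + c` with `b = 2 (x₁² + x₂²)`
and `c = f(0, x₁, x₂)` relatively prime, so by Gauss's lemma it stays reducible over `Frac R`.
A reducible biquadratic `a Z⁴ + b Z² + c` over a field has a root (then its discriminant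
`b² - 4ac` is a square) or splits into two quadratics, which forces `b² - 4ac` or `ac` to be a
square; when `t = 1` it is the quadratic `b Z² + c`, and a root makes `-bc` a square. As `R` is
integrally closed, these squares already lie in `R`. Specializing `(x₁, x₂) ↦ (X, 1)` and
comparing coefficients of a square quartic in `k[X]` rules out everything except the square
discriminant with `t = 3`, where it makes `-3` a square, i.e. gives a primitive cube root of
unity `ω`. Conversely, for `t = 3`, `f = -2 (x₀² + ω x₁² + ω² x₂²) (x₀² + ω² x₁² + ω x₂²)`.
-/

namespace Polynomial

theorem eq_quadratic_of_natDegree_le_two {R : Type*} [Semiring R] {p : R[X]}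
    (hp : p.natDegree ≤ 2) :
    p = C (p.coeff 2) * X ^ 2 + C (p.coeff 1) * X + C (p.coeff 0) := by
  conv_lhs => rw [p.as_sum_range' 3 (by omega)]
  simp only [Finset.sum_range_succ, Finset.sum_range_zero, ← C_mul_X_pow_eq_monomial,
    pow_zero, pow_one, mul_one, zero_add]
  abel

theorem natDegree_biquadratic {R : Type*} [Semiring R] [Nontrivial R] {a b c : R}
    (ha : a ≠ 0) : (C a * X ^ 4 + C b * X ^ 2 + C c).natDegree = 4 := by
  compute_degree!

theorem coeff_eq_of_quartic_eq {R : Type*} [Semiring R] {a₄ a₃ a₂ a₁ a₀ b₄ b₃ b₂ b₁ b₀ : R}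
    (h : C a₄ * X ^ 4 + C a₃ * X ^ 3 + C a₂ * X ^ 2 + C a₁ * X + C a₀
      = C b₄ * X ^ 4 + C b₃ * X ^ 3 + C b₂ * X ^ 2 + C b₁ * X + C b₀) :
    a₄ = b₄ ∧ a₃ = b₃ ∧ a₂ = b₂ ∧ a₁ = b₁ ∧ a₀ = b₀ := by
  have e := fun n => congrArg (coeff · n) h
  simp only [coeff_add, coeff_C_mul_X_pow, coeff_C_mul_X, coeff_C] at e
  exact ⟨by simpa using e 4, by simpa using e 3, by simpa using e 2, by simpa using e 1,
    by simpa using e 0⟩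

theorem isSquare_and_sq_eq_of_isSquare_biquadratic {R : Type*} [CommRing R] [IsDomain R]
    (h2 : (2 : R) ≠ 0) {a b c : R} (ha : a ≠ 0)
    (h : IsSquare (C a * X ^ 4 + C b * X ^ 2 + C c)) : IsSquare a ∧ b ^ 2 = 4 * a * c := by
  obtain ⟨s, hs⟩ := h
  have hs0 : s ≠ 0 := by
    rintro rfl
    simpa [natDegree_biquadratic ha] using congrArg natDegree hs
  have hsdeg : s.natDegree = 2 := by
    have := congrArg natDegree hs
    rw [natDegree_biquadratic ha, natDegree_mul hs0 hs0] at this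
    omega
  rw [eq_quadratic_of_natDegree_le_two hsdeg.le] at hs
  set s₂ := s.coeff 2
  set s₁ := s.coeff 1
  set s₀ := s.coeff 0
  have key : C a * X ^ 4 + C 0 * X ^ 3 + C b * X ^ 2 + C 0 * X + C c
      = C (s₂ * s₂) * X ^ 4 + C (2 * s₂ * s₁) * X ^ 3 + C (s₁ * s₁ + 2 * s₂ * s₀) * X ^ 2
        + C (2 * s₁ * s₀) * X + C (s₀ * s₀) := by
    simp only [map_zero, zero_mul, add_zero]
    rw [hs]
    simp only [map_add, map_mul, map_ofNat]
    ring
  obtain ⟨e4, e3, e2, -, e0⟩ := coeff_eq_of_quartic_eq key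
  have hs₁ : s₁ = 0 := by
    have hs₂ : s₂ ≠ 0 := left_ne_zero_of_mul (e4 ▸ ha)
    simpa [h2, hs₂] using e3.symm
  refine ⟨⟨s₂, e4⟩, ?_⟩
  rw [e2, e4, e0, hs₁]
  ring

theorem isSquare_discrim_of_isRoot_biquadratic {R : Type*} [CommRing R] {a b c x : R}
    (hx : (C a * X ^ 4 + C b * X ^ 2 + C c).IsRoot x) : IsSquare (discrim a b c) := by
  refine ⟨2 * a * (x * x) + b, (discrim_eq_sq_of_quadratic_eq_zero ?_).trans (sq _)⟩
  simpa [IsRoot, ← pow_two, ← pow_mul] using hx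

theorem exists_root_of_natDegree_eq_one {K : Type*} [Field K] {p : K[X]}
    (hp : p.natDegree = 1) : ∃ x, p.IsRoot x :=
  exists_root_of_degree_eq_one ((degree_eq_iff_natDegree_eq_of_pos one_pos).mpr hp)

theorem exists_isRoot_or_quadratic_factors_of_not_irreducible {K : Type*} [Field K] {p : K[X]}
    (hdeg : p.natDegree = 4) (hp : ¬ Irreducible p) :
    (∃ x, p.IsRoot x) ∨ ∃ g h : K[X], g.natDegree = 2 ∧ h.natDegree = 2 ∧ p = g * h := by
  have hp0 : p ≠ 0 := by rintro rfl; simp at hdeg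
  have hpu : ¬ IsUnit p := fun hu => by simp [natDegree_eq_zero_of_isUnit hu] at hdeg
  obtain ⟨g, h, rfl, hg, hh⟩ : ∃ g h, p = g * h ∧ ¬ IsUnit g ∧ ¬ IsUnit h := by
    simpa [irreducible_iff, hpu] using hp
  have hg0 : g ≠ 0 := left_ne_zero_of_mul hp0
  have hh0 : h ≠ 0 := right_ne_zero_of_mul hp0
  have hg1 := natDegree_pos_iff_degree_pos.mpr (degree_pos_of_ne_zero_of_nonunit hg0 hg)
  have hh1 := natDegree_pos_iff_degree_pos.mpr (degree_pos_of_ne_zero_of_nonunit hh0 hh)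
  rw [natDegree_mul hg0 hh0] at hdeg
  obtain hg1 | hg2 | hh1 : g.natDegree = 1 ∨ g.natDegree = 2 ∨ h.natDegree = 1 := by omega
  · obtain ⟨x, hx⟩ := exists_root_of_natDegree_eq_one hg1
    exact Or.inl ⟨x, root_mul_right_of_isRoot h hx⟩
  · exact Or.inr ⟨g, h, hg2, by omega, rfl⟩
  · obtain ⟨x, hx⟩ := exists_root_of_natDegree_eq_one hh1
    exact Or.inl ⟨x, root_mul_left_of_isRoot g hx⟩

theorem isSquare_discrim_or_isSquare_mul_of_not_irreducible_biquadratic {K : Type*} [Field K]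
    {a b c : K} (ha : a ≠ 0) (h : ¬ Irreducible (C a * X ^ 4 + C b * X ^ 2 + C c)) :
    IsSquare (discrim a b c) ∨ IsSquare (a * c) := by
  obtain ⟨x, hx⟩ | ⟨g, h, hg, hh, hgh⟩ :=
    exists_isRoot_or_quadratic_factors_of_not_irreducible (natDegree_biquadratic ha) h
  · exact Or.inl (isSquare_discrim_of_isRoot_biquadratic hx)
  rw [eq_quadratic_of_natDegree_le_two hg.le, eq_quadratic_of_natDegree_le_two hh.le] at hgh
  set g₂ := g.coeff 2
  set g₁ := g.coeff 1
  set g₀ := g.coeff 0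
  set h₂ := h.coeff 2
  set h₁ := h.coeff 1
  set h₀ := h.coeff 0
  have key : C a * X ^ 4 + C 0 * X ^ 3 + C b * X ^ 2 + C 0 * X + C c
      = C (g₂ * h₂) * X ^ 4 + C (g₂ * h₁ + g₁ * h₂) * X ^ 3
        + C (g₂ * h₀ + g₁ * h₁ + g₀ * h₂) * X ^ 2 + C (g₁ * h₀ + g₀ * h₁) * X + C (g₀ * h₀) := by
    simp only [map_zero, zero_mul, add_zero]
    rw [hgh]
    simp only [map_add, map_mul]
    ring
  obtain ⟨e4, e3, e2, e1, e0⟩ := coeff_eq_of_quartic_eq key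
  have hg₂ : g₂ ≠ 0 := left_ne_zero_of_mul (e4 ▸ ha)
  -- Either both factors are even, or their constant terms are proportional to their leading ones.
  have hcases : g₁ * (g₂ * h₀ - g₀ * h₂) = 0 := by linear_combination g₀ * e3 - g₂ * e1
  rcases mul_eq_zero.mp hcases with hg₁ | hgh₀
  · have hh₁ : h₁ = 0 := by simpa [hg₁, hg₂] using e3.symm
    refine Or.inl ⟨g₂ * h₀ - g₀ * h₂, ?_⟩
    rw [discrim, e4, e2, e0, hg₁, hh₁]
    ring
  · exact Or.inr ⟨g₂ * h₀, by rw [e4, e0]; linear_combination -(g₂ * h₀) * hgh₀⟩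

theorem isSquare_neg_mul_of_not_irreducible_quadratic {K : Type*} [Field K] {b c : K}
    (hb : b ≠ 0) (h : ¬ Irreducible (C b * X ^ 2 + C c)) : IsSquare (-(b * c)) := by
  have hdeg : (C b * X ^ 2 + C c).natDegree = 2 := by compute_degree!
  by_contra hsq
  refine h (irreducible_of_degree_le_three_of_not_isRoot (by simp [hdeg]) ?_)
  intro x hx
  refine hsq ⟨b * x, ?_⟩
  simp only [IsRoot, eval_add, eval_mul, eval_C, eval_pow, eval_X] at hx
  linear_combination -b * hx

theorem isPrimitive_biquadratic {R : Type*} [CommSemiring R] {a b c : R} (hbc : IsRelPrime b c) :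
    (C a * X ^ 4 + C b * X ^ 2 + C c).IsPrimitive := by
  refine isPrimitive_iff_isUnit_of_C_dvd.mpr fun r hr => hbc ?_ ?_
  · simpa [coeff_X, coeff_X_pow, coeff_C] using (C_dvd_iff_dvd_coeff _ _).mp hr 2
  · simpa [coeff_X, coeff_X_pow, coeff_C] using (C_dvd_iff_dvd_coeff _ _).mp hr 0

end Polynomial

theorem IsRelPrime.add_mul {R : Type*} [CommRing R] [DecompositionMonoid R] {a b : R}
    (h : IsRelPrime a b) : IsRelPrime (a + b) (a * b) :=
  .mul_right (fun _ hs ha => h ha (by simpa using dvd_sub hs ha))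
    (fun _ hs hb => h (by simpa using dvd_sub hs hb) hb)

theorem isSquare_of_isSquare_algebraMap {R K : Type*} [CommRing R] [IsDomain R] [CommRing K]
    [Algebra R K] [IsFractionRing R K] [IsIntegrallyClosed R] {r : R}
    (h : IsSquare (algebraMap R K r)) : IsSquare r := by
  obtain ⟨x, hx⟩ := h
  obtain ⟨y, rfl⟩ := IsIntegrallyClosed.exists_algebraMap_eq_of_isIntegral_pow (R := R) (x := x)
    two_pos (by rw [sq, ← hx]; exact isIntegral_algebraMap)
  exact ⟨y, IsFractionRing.injective R K (by rw [hx, map_mul])⟩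

namespace Polynomial

variable {R : Type*} [CommRing R] [IsDomain R] [IsGCDMonoid R]

theorem isSquare_discrim_or_isSquare_mul_of_isRelPrime {a b c : R} (ha : a ≠ 0)
    (hbc : IsRelPrime b c) (h : ¬ Irreducible (C a * X ^ 4 + C b * X ^ 2 + C c)) :
    IsSquare (discrim a b c) ∨ IsSquare (a * c) := by
  let K := FractionRing R
  have hinj := IsFractionRing.injective R K
  rw [(isPrimitive_biquadratic hbc).irreducible_iff_irreducible_map_fraction_map (K := K)] at h
  simp only [Polynomial.map_add, Polynomial.map_mul, Polynomial.map_pow, map_C, map_X] at h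
  refine (isSquare_discrim_or_isSquare_mul_of_not_irreducible_biquadratic
    ((map_ne_zero_iff _ hinj).mpr ha) h).imp (fun hs => ?_) (fun hs => ?_) <;>
  refine isSquare_of_isSquare_algebraMap (K := K) ?_ <;>
  simpa only [discrim, map_sub, map_mul, map_pow, map_ofNat] using hs

theorem isSquare_neg_mul_of_isRelPrime {b c : R} (hb : b ≠ 0) (hbc : IsRelPrime b c)
    (h : ¬ Irreducible (C b * X ^ 2 + C c)) : IsSquare (-(b * c)) := by
  let K := FractionRing R
  have hinj := IsFractionRing.injective R K
  have hprim : (C b * X ^ 2 + C c).IsPrimitive := by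
    simpa using isPrimitive_biquadratic (a := 0) hbc
  rw [hprim.irreducible_iff_irreducible_map_fraction_map (K := K)] at h
  simp only [Polynomial.map_add, Polynomial.map_mul, Polynomial.map_pow, map_C, map_X] at h
  refine isSquare_of_isSquare_algebraMap (K := K) ?_
  simpa using isSquare_neg_mul_of_not_irreducible_quadratic ((map_ne_zero_iff _ hinj).mpr hb) h

end Polynomial

theorem four_ne_zero_of_two_ne_zero_s13 {R : Type*} [Semiring R] [NoZeroDivisors R]
    (h2 : (2 : R) ≠ 0) : (4 : R) ≠ 0 := by
  rw [show (4 : R) = 2 * 2 by norm_num]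
  exact mul_ne_zero h2 h2

theorem exists_isPrimitiveRoot_three_of_isSquare {K : Type*} [Field K] (h2 : (2 : K) ≠ 0)
    (h3 : (3 : K) ≠ 0) (h : IsSquare (-3 : K)) : ∃ ω : K, IsPrimitiveRoot ω 3 := by
  obtain ⟨d, hd⟩ := h
  have : NeZero ((3 : ℕ) : K) := ⟨by exact_mod_cast h3⟩
  refine ⟨(d - 1) / 2, Polynomial.isRoot_cyclotomic_iff.mp ?_⟩
  simp only [Polynomial.cyclotomic_three, Polynomial.IsRoot, Polynomial.eval_add,
    Polynomial.eval_pow, Polynomial.eval_X, Polynomial.eval_one]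
  field_simp
  linear_combination -hd

section SymmetricQuartic

open MvPolynomial

variable {k : Type*} [Field k]

noncomputable def symmetricQuartic (t : k) : MvPolynomial (Fin 3) k :=
  (X 0 ^ 2 + X 1 ^ 2 + X 2 ^ 2) ^ 2 - C t * (X 0 ^ 4 + X 1 ^ 4 + X 2 ^ 4)

variable (k) in
noncomputable def symmetricQuartic.coeff₂ : MvPolynomial (Fin 2) k := C 2 * (X 0 ^ 2 + X 1 ^ 2)

noncomputable def symmetricQuartic.coeff₀ (t : k) : MvPolynomial (Fin 2) k :=
  (X 0 ^ 2 + X 1 ^ 2) ^ 2 - C t * (X 0 ^ 4 + X 1 ^ 4)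

open symmetricQuartic in
theorem finSuccEquiv_symmetricQuartic (t : k) :
    finSuccEquiv k 2 (symmetricQuartic t) = Polynomial.C (C (1 - t)) * Polynomial.X ^ 4
      + Polynomial.C (coeff₂ k) * Polynomial.X ^ 2 + Polynomial.C (coeff₀ t) := by
  have hX : ∀ i : Fin 2, finSuccEquiv k 2 (X i.succ) = Polynomial.C (X i) :=
    fun _ => finSuccEquiv_X_succ
  have hC : finSuccEquiv k 2 (C t) = Polynomial.C (C t) := by simp [finSuccEquiv_apply]
  simp only [symmetricQuartic, coeff₂, coeff₀, map_sub, map_add, map_mul, map_pow,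
    finSuccEquiv_X_zero, hC, show (1 : Fin 3) = (0 : Fin 2).succ from rfl,
    show (2 : Fin 3) = (1 : Fin 2).succ from rfl, hX, map_one, map_ofNat]
  ring

namespace symmetricQuartic

theorem isRelPrime_coeff₂_coeff₀ (h2 : (2 : k) ≠ 0) {t : k} (ht : t ≠ 0) :
    IsRelPrime (coeff₂ k) (coeff₀ t) := by
  have hXY : IsRelPrime (X 0 : MvPolynomial (Fin 2) k) (X 1) :=
    X_prime.irreducible.isRelPrime_iff_not_dvd.mpr (by simp [X_dvd_X])
  have hsp := hXY.pow (m := 2) (n := 2) |>.add_mul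
  have hc : coeff₀ t = (X 0 ^ 2 + X 1 ^ 2) * (C (1 - t) * (X 0 ^ 2 + X 1 ^ 2))
      + C (2 * t) * (X 0 ^ 2 * X 1 ^ 2 : MvPolynomial (Fin 2) k) := by
    simp only [coeff₀, map_sub, map_one, map_mul, map_ofNat]
    ring
  rw [hc, coeff₂, isRelPrime_mul_unit_left_left ((Ne.isUnit h2).map C)]
  exact (isRelPrime_mul_unit_left_right ((mul_ne_zero h2 ht).isUnit.map C)).mpr hsp
    |>.mul_add_left_right _

theorem coeff₂_ne_zero (h2 : (2 : k) ≠ 0) : coeff₂ k ≠ 0 :=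
  fun h => h2 (by simpa [coeff₂] using congrArg (eval ![1, 0]) h)

theorem aeval_coeff₂ :
    aeval ![(Polynomial.X : Polynomial k), 1] (coeff₂ k) = 2 * (Polynomial.X ^ 2 + 1) := by
  simp [coeff₂, map_ofNat]

theorem aeval_coeff₀ (t : k) : aeval ![(Polynomial.X : Polynomial k), 1] (coeff₀ t)
    = Polynomial.C (1 - t) * Polynomial.X ^ 4 + 2 * Polynomial.X ^ 2 + Polynomial.C (1 - t) := by
  simp only [coeff₀, map_sub, map_add, map_mul, map_pow, aeval_X, aeval_C, map_one,
    Matrix.cons_val_zero, Matrix.cons_val_one, Polynomial.algebraMap_eq]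
  ring

theorem eq_three_and_isSquare_of_isSquare_discrim (h2 : (2 : k) ≠ 0) {t : k} (ht : t ≠ 0)
    (ht2 : t ≠ 2) (ht1 : t ≠ 1) (h : IsSquare (discrim (C (1 - t)) (coeff₂ k) (coeff₀ t))) :
    t = 3 ∧ IsSquare (-3 : k) := by
  have h' := h.map (aeval ![Polynomial.X, 1] : MvPolynomial (Fin 2) k →ₐ[k] Polynomial k)
  have hspec : aeval ![Polynomial.X, 1] (discrim (C (1 - t)) (coeff₂ k) (coeff₀ t))
      = Polynomial.C (4 * t * (2 - t)) * Polynomial.X ^ 4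
        + Polynomial.C (8 * t) * Polynomial.X ^ 2 + Polynomial.C (4 * t * (2 - t)) := by
    simp only [discrim, map_sub, map_mul, map_pow, map_one, map_ofNat, aeval_C, aeval_coeff₂,
      aeval_coeff₀, Polynomial.algebraMap_eq]
    ring
  have h4 := four_ne_zero_of_two_ne_zero_s13 h2
  obtain ⟨⟨d, hd⟩, heq⟩ := Polynomial.isSquare_and_sq_eq_of_isSquare_biquadratic h2
    (mul_ne_zero (mul_ne_zero h4 ht) (sub_ne_zero.mpr ht2.symm)) (hspec ▸ h')
  have h0 : 4 * (4 * t) ^ 2 * ((t - 1) * (t - 3)) = 0 := by linear_combination -heq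
  have ht3 : t = 3 := by simpa [h4, ht, sub_eq_zero, ht1] using h0
  subst ht3
  exact ⟨rfl, d / 2, by field_simp; linear_combination hd⟩

theorem not_isSquare_mul_coeff₀ (h2 : (2 : k) ≠ 0) {t : k} (ht : t ≠ 0) (ht2 : t ≠ 2)
    (ht1 : t ≠ 1) : ¬ IsSquare (C (1 - t) * coeff₀ t) := by
  intro h
  have h' := h.map (aeval ![Polynomial.X, 1] : MvPolynomial (Fin 2) k →ₐ[k] Polynomial k)
  have hspec : aeval ![Polynomial.X, 1] (C (1 - t) * coeff₀ t)
      = Polynomial.C ((1 - t) ^ 2) * Polynomial.X ^ 4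
        + Polynomial.C (2 * (1 - t)) * Polynomial.X ^ 2 + Polynomial.C ((1 - t) ^ 2) := by
    simp only [map_sub, map_mul, map_pow, map_one, map_ofNat, aeval_C, aeval_coeff₀,
      Polynomial.algebraMap_eq]
    ring
  obtain ⟨-, heq⟩ := Polynomial.isSquare_and_sq_eq_of_isSquare_biquadratic h2
    (pow_ne_zero 2 (sub_ne_zero.mpr ht1.symm)) (hspec ▸ h')
  have h0 : 4 * (1 - t) ^ 2 * (t * (2 - t)) = 0 := by linear_combination heq
  simp [four_ne_zero_of_two_ne_zero_s13 h2, ht, sub_eq_zero, ht1.symm, ht2.symm] at h0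

theorem not_isSquare_neg_coeff₂_mul_coeff₀_one (h2 : (2 : k) ≠ 0) :
    ¬ IsSquare (-(coeff₂ k * coeff₀ 1)) := by
  intro h
  have h' := h.map (aeval ![Polynomial.X, 1] : MvPolynomial (Fin 2) k →ₐ[k] Polynomial k)
  have hspec : aeval ![Polynomial.X, 1] (-(coeff₂ k * coeff₀ 1))
      = Polynomial.C (-4 : k) * Polynomial.X ^ 4 + Polynomial.C (-4) * Polynomial.X ^ 2
        + Polynomial.C 0 := by
    simp only [map_neg, map_mul, map_zero, aeval_coeff₂, aeval_coeff₀, sub_self, map_ofNat]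
    ring
  obtain ⟨-, heq⟩ := Polynomial.isSquare_and_sq_eq_of_isSquare_biquadratic h2
    (neg_ne_zero.mpr (four_ne_zero_of_two_ne_zero_s13 h2)) (hspec ▸ h')
  exact pow_ne_zero 4 h2 (by linear_combination heq)

end symmetricQuartic

open symmetricQuartic

theorem eq_three_and_isSquare_of_not_irreducible (h2 : (2 : k) ≠ 0) {t : k} (ht : t ≠ 0)
    (ht2 : t ≠ 2) (h : ¬ Irreducible (symmetricQuartic t)) : t = 3 ∧ IsSquare (-3 : k) := by
  rw [← MulEquiv.irreducible_iff (finSuccEquiv k 2), finSuccEquiv_symmetricQuartic] at h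
  have hbc := isRelPrime_coeff₂_coeff₀ h2 ht
  by_cases ht1 : t = 1
  · subst ht1
    rw [sub_self, map_zero, map_zero, zero_mul, zero_add] at h
    exact absurd (Polynomial.isSquare_neg_mul_of_isRelPrime (coeff₂_ne_zero h2) hbc h)
      (not_isSquare_neg_coeff₂_mul_coeff₀_one h2)
  · have ha : C (1 - t) ≠ (0 : MvPolynomial (Fin 2) k) :=
      C_ne_zero.mpr (sub_ne_zero.mpr (Ne.symm ht1))
    rcases Polynomial.isSquare_discrim_or_isSquare_mul_of_isRelPrime ha hbc h with hd | hac
    · exact eq_three_and_isSquare_of_isSquare_discrim h2 ht ht2 ht1 hd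
    · exact absurd hac (not_isSquare_mul_coeff₀ h2 ht ht2 ht1)

theorem not_irreducible_symmetricQuartic_three {ω : k} (hω : IsPrimitiveRoot ω 3) :
    ¬ Irreducible (symmetricQuartic (3 : k)) := by
  have hω' : ω ^ 2 + ω + 1 = 0 := by
    simpa [Polynomial.cyclotomic_three] using hω.isRoot_cyclotomic (by norm_num)
  have hC : (C ω : MvPolynomial (Fin 3) k) ^ 2 + C ω + 1 = 0 := by
    simpa using congrArg (C : k → MvPolynomial (Fin 3) k) hω'
  have hfac : symmetricQuartic (3 : k)
      = (C (-2) * (X 0 ^ 2 + C ω * X 1 ^ 2 + C (ω ^ 2) * X 2 ^ 2))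
        * (X 0 ^ 2 + C (ω ^ 2) * X 1 ^ 2 + C ω * X 2 ^ 2) := by
    simp only [symmetricQuartic, map_neg, map_ofNat, map_pow]
    linear_combination (2 * (C ω - 1) * (X 1 ^ 4 + X 2 ^ 4)
      + 2 * (X 0 ^ 2 * X 1 ^ 2 + X 0 ^ 2 * X 2 ^ 2)
      + 2 * (C ω ^ 2 - C ω + 1) * (X 1 ^ 2 * X 2 ^ 2)) * hC
  have hnu (u v : k) :
      ¬ IsUnit (X 0 ^ 2 + C u * X 1 ^ 2 + C v * X 2 ^ 2 : MvPolynomial (Fin 3) k) :=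
    fun hu => by simpa using hu.map constantCoeff
  intro h
  rcases h.isUnit_or_isUnit hfac with hu | hu
  · exact hnu _ _ (isUnit_of_mul_isUnit_right hu)
  · exact hnu _ _ hu

end SymmetricQuartic

open MvPolynomial

/-- For a field `k` with `char k ≠ 2` and `t ∉ {0, 2}`, the polynomial
`f = (x₁²+x₂²+x₃²)² - t(x₁⁴+x₂⁴+x₃⁴)` is reducible iff `t = 3` and `k` contains a
primitive third root of unity. -/
theorem stmt_13 (k : Type*) [Field k] (hchar : ringChar k ≠ 2)
    (t : k) (ht : t ≠ 0) (ht2 : t ≠ 2) :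
    ¬ Irreducible ((X 0 ^ 2 + X 1 ^ 2 + X 2 ^ 2) ^ 2
        - C t * (X 0 ^ 4 + X 1 ^ 4 + X 2 ^ 4) : MvPolynomial (Fin 3) k) ↔
      t = 3 ∧ ∃ ω : k, IsPrimitiveRoot ω 3 := by
  have h2 : (2 : k) ≠ 0 := Ring.two_ne_zero hchar
  constructor
  · intro h
    obtain ⟨rfl, hsq⟩ := eq_three_and_isSquare_of_not_irreducible h2 ht ht2 h
    exact ⟨rfl, exists_isPrimitiveRoot_three_of_isSquare h2 ht hsq⟩
  · rintro ⟨rfl, ω, hω⟩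
    exact not_irreducible_symmetricQuartic_three hω
end
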